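/- arXiv:1904.01462 — 2 statements merged into one kernel-verified Lean document; each statement's English description precedes it below -/
import Mathlib

section
/- Let n ∈ ℕ and let c : Fin n → Fin n → Fin n → ℝ. For each i ∈ Fin n set B_i = ∑_{k<l<i} (c i k l) • (e_k * e_l) ∈ Cl_n (so B_i only involves generators with index strictly below i, as happens for the 2-forms deⁱ of a nilpotent orthonormal frame). Then (∑_i eᵢ * B_i)^2 = ∑_i (-(B_i * B_i)) + ∑_{i<j} (eᵢ * eⱼ * B_i * B_j - B_j * B_i * eᵢ * eⱼ). (This is the algebraic identity 16 D̸² = ∑ᵢ -(deⁱ)² + ∑_{i<j} (e^{ij} deⁱ deʲ - deʲ deⁱ e^{ij}) for the square of the invariant Dirac operator on a nilmanifold, Lemma 'square-formula' of the paper.) -/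
open scoped BigOperators

/-- The negative-definite quadratic form `Q v = -∑ i, (v i)^2` on `EuclideanSpace ℝ (Fin n)`. -/
noncomputable def Q (n : ℕ) : QuadraticForm ℝ (EuclideanSpace ℝ (Fin n)) :=
  QuadraticMap.ofPolar (fun v => -∑ i, v i ^ 2)
    (fun a v => by
      simp only [PiLp.smul_apply, smul_eq_mul, mul_pow]
      rw [← Finset.mul_sum]
      ring)
    (fun x x' y => by
      have h : ∀ (u w : EuclideanSpace ℝ (Fin n)),
          QuadraticMap.polar (fun v : EuclideanSpace ℝ (Fin n) => -∑ i, v i ^ 2) u w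
            = -(2 * ∑ i, u i * w i) := by
        intro u w
        have hsq : ∀ i, (u i + w i) ^ 2 = u i ^ 2 + w i ^ 2 + 2 * (u i * w i) := fun i => by ring
        simp_rw [QuadraticMap.polar, PiLp.add_apply, hsq, Finset.sum_add_distrib,
          ← Finset.mul_sum]
        ring
      simp_rw [h, PiLp.add_apply, add_mul, Finset.sum_add_distrib]
      ring)
    (fun a x y => by
      have h : ∀ (u w : EuclideanSpace ℝ (Fin n)),
          QuadraticMap.polar (fun v : EuclideanSpace ℝ (Fin n) => -∑ i, v i ^ 2) u w
            = -(2 * ∑ i, u i * w i) := by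
        intro u w
        have hsq : ∀ i, (u i + w i) ^ 2 = u i ^ 2 + w i ^ 2 + 2 * (u i * w i) := fun i => by ring
        simp_rw [QuadraticMap.polar, PiLp.add_apply, hsq, Finset.sum_add_distrib,
          ← Finset.mul_sum]
        ring
      simp_rw [h, PiLp.smul_apply, smul_eq_mul, mul_assoc, ← Finset.mul_sum]
      ring)

/-- The image in the Clifford algebra `Cl_n` of the `i`-th standard basis vector. -/
noncomputable def e {n : ℕ} (i : Fin n) : CliffordAlgebra (Q n) :=
  CliffordAlgebra.ι (Q n) (EuclideanSpace.single i 1)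

lemma Q_apply {n : ℕ} (v : EuclideanSpace ℝ (Fin n)) : Q n v = -∑ i, v i ^ 2 := rfl

lemma e_sq {n : ℕ} (i : Fin n) : e i * e i = -1 := by
  rw [e, CliffordAlgebra.ι_sq_scalar]
  have : Q n (EuclideanSpace.single i 1) = -1 := by
    rw [Q_apply]
    simp [EuclideanSpace.single_apply]
  rw [this, map_neg, map_one]

lemma e_anticomm {n : ℕ} {i j : Fin n} (h : i ≠ j) : e i * e j = -(e j * e i) := by
  have hp := CliffordAlgebra.ι_mul_ι_add_swap (Q := Q n)
    (EuclideanSpace.single i 1) (EuclideanSpace.single j 1)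
  have hpol : QuadraticMap.polar (Q n) (EuclideanSpace.single i 1) (EuclideanSpace.single j 1)
      = 0 := by
    simp only [QuadraticMap.polar, Q_apply, PiLp.add_apply, EuclideanSpace.single_apply]
    have key : ∀ x : Fin n, ((if x = i then (1:ℝ) else 0) + if x = j then 1 else 0) ^ 2
        = (if x = i then (1:ℝ) else 0) ^ 2 + (if x = j then (1:ℝ) else 0) ^ 2 := by
      intro x
      by_cases hx : x = i <;> by_cases hy : x = j <;>
        simp [hx, hy, h, h.symm]; try exact absurd (hx.symm.trans hy) h
    simp_rw [key, Finset.sum_add_distrib]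
    ring
  rw [hpol, map_zero] at hp
  rw [e, e]
  linear_combination (norm := noncomm_ring) hp

lemma e_comm_pair {n : ℕ} {j k l : Fin n} (hk : k ≠ j) (hl : l ≠ j) :
    e j * (e k * e l) = (e k * e l) * e j := by
  rw [← mul_assoc, e_anticomm hk.symm, neg_mul, mul_assoc, e_anticomm hl.symm, mul_neg,
    neg_neg, ← mul_assoc]

lemma e_comm_B {n : ℕ} (c : Fin n → Fin n → Fin n → ℝ) (B : Fin n → CliffordAlgebra (Q n))
    (hB : ∀ i : Fin n, B i = ∑ l ∈ Finset.Iio i, ∑ k ∈ Finset.Iio l, c i k l • (e k * e l))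
    {i j : Fin n} (hij : i ≤ j) : e j * B i = B i * e j := by
  rw [hB i, Finset.mul_sum, Finset.sum_mul]
  refine Finset.sum_congr rfl fun l hl => ?_
  rw [Finset.mul_sum, Finset.sum_mul]
  refine Finset.sum_congr rfl fun k hk => ?_
  rw [Finset.mem_Iio] at hl hk
  rw [mul_smul_comm, smul_mul_assoc,
    e_comm_pair (ne_of_lt (lt_of_lt_of_le (hk.trans hl) hij)) (ne_of_lt (lt_of_lt_of_le hl hij))]

/-- **Lemma (square-formula).** If each `B i = ∑_{k<l<i} (c i k l) • (e_k * e_l)` only involves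
generators of index strictly below `i`, then
`(∑ i, eᵢ * B i)² = ∑ i, -(B i * B i) + ∑_{i<j} (eᵢ*eⱼ*B i*B j - B j*B i*eᵢ*eⱼ)`. -/
theorem clifford_dirac_square (n : ℕ) (c : Fin n → Fin n → Fin n → ℝ)
    (B : Fin n → CliffordAlgebra (Q n))
    (hB : ∀ i : Fin n, B i = ∑ l ∈ Finset.Iio i, ∑ k ∈ Finset.Iio l, c i k l • (e k * e l)) :
    (∑ i : Fin n, e i * B i) ^ 2
      = ∑ i : Fin n, (-(B i * B i))
        + ∑ i : Fin n, ∑ j ∈ Finset.Ioi i,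
            (e i * e j * B i * B j - B j * B i * (e i * e j)) := by
  set f : Fin n → CliffordAlgebra (Q n) := fun i => e i * B i with hf
  have diag : ∀ i, f i * f i = -(B i * B i) := by
    intro i
    have hc : e i * B i = B i * e i := e_comm_B c B hB le_rfl
    calc e i * B i * (e i * B i) = e i * (B i * e i) * B i := by noncomm_ring
    _ = e i * (e i * B i) * B i := by rw [← hc]
    _ = (e i * e i) * (B i * B i) := by noncomm_ring
    _ = -(B i * B i) := by rw [e_sq]; noncomm_ring
  have off : ∀ i j : Fin n, i < j →
      f i * f j + f j * f i = e i * e j * B i * B j - B j * B i * (e i * e j) := by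
    intro i j hij
    have h1 : e j * B i = B i * e j := e_comm_B c B hB hij.le
    have h2 : e j * B j = B j * e j := e_comm_B c B hB le_rfl
    have h3 : e i * B i = B i * e i := e_comm_B c B hB le_rfl
    have h4 : e i * e j = -(e j * e i) := e_anticomm hij.ne
    have t1 : f i * f j = e i * e j * B i * B j := by
      calc e i * B i * (e j * B j) = e i * (B i * e j) * B j := by noncomm_ring
      _ = e i * (e j * B i) * B j := by rw [← h1]
      _ = e i * e j * B i * B j := by noncomm_ring
    have t2 : f j * f i = -(B j * B i * (e i * e j)) := by
      calc e j * B j * (e i * B i) = (e j * B j) * (B i * e i) := by rw [← h3]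
      _ = (B j * e j) * (B i * e i) := by rw [← h2]
      _ = B j * (e j * B i) * e i := by noncomm_ring
      _ = B j * (B i * e j) * e i := by rw [h1]
      _ = B j * B i * (e j * e i) := by noncomm_ring
      _ = -(B j * B i * (e i * e j)) := by rw [h4]; noncomm_ring
    rw [t1, t2]; abel
  have huniv : ∀ i : Fin n, (Finset.univ : Finset (Fin n))
      = insert i (Finset.Iio i ∪ Finset.Ioi i) := by
    intro i
    ext x
    simp only [Finset.mem_univ, Finset.mem_insert, Finset.mem_union, Finset.mem_Iio,
      Finset.mem_Ioi, true_iff]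
    rcases lt_trichotomy x i with h | h | h <;> tauto
  have hnotmem : ∀ i : Fin n, i ∉ Finset.Iio i ∪ Finset.Ioi i := by
    intro i; simp
  have hdisj : ∀ i : Fin n, Disjoint (Finset.Iio i) (Finset.Ioi i) := by
    intro i
    refine Finset.disjoint_left.2 fun x hx hx' => ?_
    rw [Finset.mem_Iio] at hx; rw [Finset.mem_Ioi] at hx'
    exact absurd (hx.trans hx') (lt_irrefl _)
  have expand : ∀ i : Fin n, (∑ j, f i * f j)
      = f i * f i + ((∑ j ∈ Finset.Iio i, f i * f j) + ∑ j ∈ Finset.Ioi i, f i * f j) := by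
    intro i
    conv_lhs => rw [huniv i]
    rw [Finset.sum_insert (hnotmem i), Finset.sum_union (hdisj i)]
  have swap : (∑ i : Fin n, ∑ j ∈ Finset.Iio i, f i * f j)
      = ∑ i : Fin n, ∑ j ∈ Finset.Ioi i, f j * f i := by
    rw [Finset.sum_comm' (t' := Finset.univ) (s' := fun j => Finset.Ioi j)]
    intro x y
    simp only [Finset.mem_univ, Finset.mem_Iio, Finset.mem_Ioi, true_and, and_true]
  calc (∑ i : Fin n, f i) ^ 2
      = ∑ i : Fin n, ∑ j : Fin n, f i * f j := by rw [sq, Finset.sum_mul_sum]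
    _ = ∑ i : Fin n, (f i * f i
          + ((∑ j ∈ Finset.Iio i, f i * f j) + ∑ j ∈ Finset.Ioi i, f i * f j)) :=
        Finset.sum_congr rfl fun i _ => expand i
    _ = (∑ i : Fin n, f i * f i)
          + ((∑ i : Fin n, ∑ j ∈ Finset.Iio i, f i * f j)
            + ∑ i : Fin n, ∑ j ∈ Finset.Ioi i, f i * f j) := by
        rw [Finset.sum_add_distrib, Finset.sum_add_distrib]
    _ = (∑ i : Fin n, f i * f i)
          + ∑ i : Fin n, ((∑ j ∈ Finset.Ioi i, f j * f i)
            + ∑ j ∈ Finset.Ioi i, f i * f j) := by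
        rw [swap, Finset.sum_add_distrib]
    _ = (∑ i : Fin n, f i * f i)
          + ∑ i : Fin n, ∑ j ∈ Finset.Ioi i, (f i * f j + f j * f i) := by
        congr 1
        refine Finset.sum_congr rfl fun i _ => ?_
        rw [← Finset.sum_add_distrib]
        exact Finset.sum_congr rfl fun j _ => add_comm _ _
    _ = ∑ i : Fin n, (-(B i * B i))
          + ∑ i : Fin n, ∑ j ∈ Finset.Ioi i,
              (e i * e j * B i * B j - B j * B i * (e i * e j)) := by
        congr 1
        · exact Finset.sum_congr rfl fun i _ => diag i
        · exact Finset.sum_congr rfl fun i _ => Finset.sum_congr rfl fun j hj =>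
            off i j (Finset.mem_Ioi.1 hj)
end

section
/- In Cl_5, for all real numbers μ₁₂, λ₁₂₄, μ₁₃, λ₁₂₅, λ₁₃, μ₁₄, μ₂₃, set x = μ₁₂ • (e₃*e₁*e₂) + λ₁₂₄ • (e₄*e₁*e₂) + μ₁₃ • (e₄*e₁*e₃) + λ₁₂₅ • (e₅*e₁*e₂) + λ₁₃ • (e₅*e₁*e₃) + μ₁₄ • (e₅*e₁*e₄) + μ₂₃ • (e₅*e₂*e₃). Then x is NOT a unit of Cl_5 if and only if (μ₁₂² + λ₁₂₄² + μ₁₃² + λ₁₂₅² + λ₁₃² + μ₁₄² + μ₂₃²)² = 4·(μ₁₄²·μ₂₃² + (-μ₁₃·λ₁₂₅ + λ₁₃·λ₁₂₄ - μ₁₂·μ₁₄)² + λ₁₂₄²·μ₂₃² + μ₁₃²·μ₂₃²). (x is 4× the invariant Dirac operator of a metric on the nilpotent Lie algebra 𝒩₅,₁ = (0,0,12,13,14+23); this is the 𝒩₅,₁ case of the paper's Theorem on left-invariant harmonic spinors on 5-dimensional nilmanifolds.) -/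
/-!
Write `x² = N + b` with `N` the sum of the squared coefficients and `b` a 4-vector; `b² = c` is
a scalar, so `(N - b)(N + b) = N² - c`. If `N² ≠ c` this inverts `x²`, hence `x`. If `N² = c`
and `x` is a unit, cancelling `x²` gives `b = N`; but `y ↦ ∑ eᵢ y eᵢ` multiplies scalars by `-5`
and 4-vectors by `3`, so `N = 0` and `x² = 0`, impossible in the nontrivial algebra `Cl₅`.
-/

open scoped BigOperators

section AlgebraMapAdd

variable {K A : Type*} [Field K] [Ring A] [Algebra K A]

theorem algebraMap_sub_mul_algebraMap_add {b : A} {c : K} (hb : b * b = algebraMap K A c)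
    (r : K) :
    (algebraMap K A r - b) * (algebraMap K A r + b) = algebraMap K A (r ^ 2 - c) := by
  rw [sub_mul, mul_add, mul_add, Algebra.commutes r b, hb, ← map_mul, map_sub, pow_two]
  abel

theorem algebraMap_add_mul_algebraMap_sub {b : A} {c : K} (hb : b * b = algebraMap K A c)
    (r : K) :
    (algebraMap K A r + b) * (algebraMap K A r - b) = algebraMap K A (r ^ 2 - c) := by
  rw [add_mul, mul_sub, mul_sub, Algebra.commutes r b, hb, ← map_mul, map_sub, pow_two]
  abel

theorem isUnit_algebraMap_add_iff [Nontrivial A] {b : A} {c : K}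
    (hb : b * b = algebraMap K A c) (hb_scalar : ∀ r : K, b = algebraMap K A r → r = 0) (r : K) :
    IsUnit (algebraMap K A r + b) ↔ r ^ 2 ≠ c := by
  constructor
  · intro hu hrc
    have hb_eq : b = algebraMap K A r := by
      have h := algebraMap_sub_mul_algebraMap_add hb r
      rw [hrc, sub_self, map_zero, hu.mul_left_eq_zero, sub_eq_zero] at h
      exact h.symm
    obtain rfl : r = 0 := hb_scalar r hb_eq
    rw [hb_eq, map_zero, add_zero] at hu
    exact not_isUnit_zero hu
  · intro hrc
    have hd : r ^ 2 - c ≠ 0 := sub_ne_zero.mpr hrc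
    refine isUnit_iff_exists.mpr
      ⟨algebraMap K A (r ^ 2 - c)⁻¹ * (algebraMap K A r - b), ?_, ?_⟩
    · rw [← mul_assoc, ← Algebra.commutes, mul_assoc, algebraMap_add_mul_algebraMap_sub hb,
        ← map_mul, inv_mul_cancel₀ hd, map_one]
    · rw [mul_assoc, algebraMap_sub_mul_algebraMap_add hb, ← map_mul, inv_mul_cancel₀ hd,
        map_one]

end AlgebraMapAdd

section CliffordGenerators

variable {n : ℕ}

theorem Q_single (i : Fin n) : Q n (EuclideanSpace.single i 1) = -1 := by
  simp [Q, PiLp.single_apply, apply_ite (· ^ 2)]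

theorem Q_isOrtho_single (i j : Fin n) (h : i ≠ j) :
    (Q n).IsOrtho (EuclideanSpace.single i 1) (EuclideanSpace.single j 1) := by
  rw [QuadraticMap.isOrtho_def]
  simp [Q, PiLp.single_apply, add_sq, Finset.sum_add_distrib, h.symm, apply_ite (· ^ 2)]

theorem e_mul_self (i : Fin n) : e i * e i = -1 := by
  rw [e, CliffordAlgebra.ι_sq_scalar, Q_single, map_neg, map_one]

theorem e_mul_e_comm {i j : Fin n} (h : i ≠ j) : e i * e j = -(e j * e i) :=
  CliffordAlgebra.ι_mul_ι_comm_of_isOrtho (Q_isOrtho_single i j h)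

theorem e_mul_e_of_lt {i j : Fin n} (h : j < i) : e i * e j = -(e j * e i) :=
  e_mul_e_comm h.ne'

theorem e_mul_e_mul_self (i : Fin n) (z : CliffordAlgebra (Q n)) : e i * (e i * z) = -z := by
  rw [← mul_assoc, e_mul_self, neg_one_mul]

theorem e_mul_e_mul_of_lt {i j : Fin n} (h : j < i) (z : CliffordAlgebra (Q n)) :
    e i * (e j * z) = -(e j * (e i * z)) := by
  rw [← mul_assoc, e_mul_e_comm h.ne', neg_mul, mul_assoc]

theorem sum_e_mul_algebraMap_mul_e (r : ℝ) :
    ∑ i : Fin n, e i * algebraMap ℝ _ r * e i = algebraMap ℝ (CliffordAlgebra (Q n)) (-n * r) := by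
  simp_rw [← Algebra.commutes, mul_assoc, e_mul_self, mul_neg_one, Finset.sum_neg_distrib,
    Finset.sum_const, Finset.card_univ, Fintype.card_fin, neg_mul, map_neg, ← nsmul_eq_mul,
    map_nsmul]

theorem eq_zero_of_sum_e_mul_mul_e_eq_smul {b : CliffordAlgebra (Q n)} {k : ℝ}
    (hb : ∑ i, e i * b * e i = k • b) (hk : k ≠ -n) (r : ℝ) (hr : b = algebraMap ℝ _ r) :
    r = 0 := by
  rw [hr, sum_e_mul_algebraMap_mul_e, Algebra.smul_def, ← map_mul] at hb
  by_contra hr0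
  exact hk (mul_right_cancel₀ hr0 ((algebraMap ℝ _).injective hb)).symm

end CliffordGenerators

namespace N51

variable (μ₁₂ lam₁₂₄ μ₁₃ lam₁₂₅ lam₁₃ μ₁₄ μ₂₃ : ℝ)

noncomputable def dirac : CliffordAlgebra (Q 5) :=
  μ₁₂ • (e (2 : Fin 5) * e 0 * e 1) + lam₁₂₄ • (e (3 : Fin 5) * e 0 * e 1)
    + μ₁₃ • (e (3 : Fin 5) * e 0 * e 2) + lam₁₂₅ • (e (4 : Fin 5) * e 0 * e 1)
    + lam₁₃ • (e (4 : Fin 5) * e 0 * e 2) + μ₁₄ • (e (4 : Fin 5) * e 0 * e 3)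
    + μ₂₃ • (e (4 : Fin 5) * e 1 * e 2)

def normSq : ℝ :=
  μ₁₂ ^ 2 + lam₁₂₄ ^ 2 + μ₁₃ ^ 2 + lam₁₂₅ ^ 2 + lam₁₃ ^ 2 + μ₁₄ ^ 2 + μ₂₃ ^ 2

noncomputable def fourVector : CliffordAlgebra (Q 5) :=
  (-(2 * μ₁₄ * μ₂₃)) • (e (0 : Fin 5) * (e 1 * (e 2 * e 3)))
    + (2 * μ₁₃ * μ₂₃) • (e (0 : Fin 5) * (e 1 * (e 3 * e 4)))
    + (-(2 * lam₁₂₄ * μ₂₃)) • (e (0 : Fin 5) * (e 2 * (e 3 * e 4)))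
    + (2 * (-(μ₁₃ * lam₁₂₅) + lam₁₃ * lam₁₂₄ - μ₁₂ * μ₁₄)) • (e (1 : Fin 5) * (e 2 * (e 3 * e 4)))

def fourVectorSq : ℝ :=
  4 * (μ₁₄ ^ 2 * μ₂₃ ^ 2 + (-(μ₁₃ * lam₁₂₅) + lam₁₃ * lam₁₂₄ - μ₁₂ * μ₁₄) ^ 2
    + lam₁₂₄ ^ 2 * μ₂₃ ^ 2 + μ₁₃ ^ 2 * μ₂₃ ^ 2)

theorem dirac_mul_self :
    dirac μ₁₂ lam₁₂₄ μ₁₃ lam₁₂₅ lam₁₃ μ₁₄ μ₂₃ * dirac μ₁₂ lam₁₂₄ μ₁₃ lam₁₂₅ lam₁₃ μ₁₄ μ₂₃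
      = algebraMap ℝ _ (normSq μ₁₂ lam₁₂₄ μ₁₃ lam₁₂₅ lam₁₃ μ₁₄ μ₂₃)
        + fourVector μ₁₂ lam₁₂₄ μ₁₃ lam₁₂₅ lam₁₃ μ₁₄ μ₂₃ := by
  rw [dirac, fourVector, normSq, Algebra.algebraMap_eq_smul_one]
  simp only [mul_add, add_mul, smul_mul_assoc, mul_smul_comm, mul_assoc]
  simp (disch := decide) only [e_mul_e_of_lt, e_mul_e_mul_of_lt, e_mul_self, e_mul_e_mul_self,
    mul_neg, neg_neg, mul_one, smul_neg]
  module

theorem fourVector_mul_self :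
    fourVector μ₁₂ lam₁₂₄ μ₁₃ lam₁₂₅ lam₁₃ μ₁₄ μ₂₃ * fourVector μ₁₂ lam₁₂₄ μ₁₃ lam₁₂₅ lam₁₃ μ₁₄ μ₂₃
      = algebraMap ℝ _ (fourVectorSq μ₁₂ lam₁₂₄ μ₁₃ lam₁₂₅ lam₁₃ μ₁₄ μ₂₃) := by
  rw [fourVector, fourVectorSq, Algebra.algebraMap_eq_smul_one]
  simp only [mul_add, add_mul, smul_mul_assoc, mul_smul_comm, mul_assoc]
  simp (disch := decide) only [e_mul_e_of_lt, e_mul_e_mul_of_lt, e_mul_self, e_mul_e_mul_self,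
    mul_neg, neg_neg, mul_one, smul_neg]
  module

/-- For a 4-blade `B`, `eᵢ B eᵢ` is `B` if `i` occurs in `B` (four times) and `-B` otherwise. -/
theorem sum_e_mul_fourVector_mul_e :
    ∑ i, e i * fourVector μ₁₂ lam₁₂₄ μ₁₃ lam₁₂₅ lam₁₃ μ₁₄ μ₂₃ * e i
      = (3 : ℝ) • fourVector μ₁₂ lam₁₂₄ μ₁₃ lam₁₂₅ lam₁₃ μ₁₄ μ₂₃ := by
  rw [fourVector, Fin.sum_univ_five]
  simp only [mul_add, add_mul, smul_mul_assoc, mul_smul_comm, smul_smul, mul_assoc, smul_add]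
  simp (disch := decide) only [e_mul_e_of_lt, e_mul_e_mul_of_lt, e_mul_self, e_mul_e_mul_self,
    mul_neg, neg_neg, mul_one, smul_neg]
  module

end N51

/-- **The `𝒩₅,₁` case.** In `Cl₅`, the element
`x = μ₁₂ • (e₃e₁e₂) + λ₁₂₄ • (e₄e₁e₂) + μ₁₃ • (e₄e₁e₃) + λ₁₂₅ • (e₅e₁e₂)
   + λ₁₃ • (e₅e₁e₃) + μ₁₄ • (e₅e₁e₄) + μ₂₃ • (e₅e₂e₃)`
fails to be a unit iff
`(μ₁₂² + λ₁₂₄² + μ₁₃² + λ₁₂₅² + λ₁₃² + μ₁₄² + μ₂₃²)²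
  = 4 (μ₁₄²μ₂₃² + (-μ₁₃λ₁₂₅ + λ₁₃λ₁₂₄ - μ₁₂μ₁₄)² + λ₁₂₄²μ₂₃² + μ₁₃²μ₂₃²)`. -/
theorem clifford_N51_dirac (μ₁₂ lam₁₂₄ μ₁₃ lam₁₂₅ lam₁₃ μ₁₄ μ₂₃ : ℝ)
    (x : CliffordAlgebra (Q 5))
    (hx : x = μ₁₂ • (e (2 : Fin 5) * e 0 * e 1) + lam₁₂₄ • (e (3 : Fin 5) * e 0 * e 1)
        + μ₁₃ • (e (3 : Fin 5) * e 0 * e 2) + lam₁₂₅ • (e (4 : Fin 5) * e 0 * e 1)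
        + lam₁₃ • (e (4 : Fin 5) * e 0 * e 2) + μ₁₄ • (e (4 : Fin 5) * e 0 * e 3)
        + μ₂₃ • (e (4 : Fin 5) * e 1 * e 2)) :
    ¬ IsUnit x ↔
      (μ₁₂ ^ 2 + lam₁₂₄ ^ 2 + μ₁₃ ^ 2 + lam₁₂₅ ^ 2 + lam₁₃ ^ 2 + μ₁₄ ^ 2 + μ₂₃ ^ 2) ^ 2
        = 4 * (μ₁₄ ^ 2 * μ₂₃ ^ 2 + (-(μ₁₃ * lam₁₂₅) + lam₁₃ * lam₁₂₄ - μ₁₂ * μ₁₄) ^ 2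
            + lam₁₂₄ ^ 2 * μ₂₃ ^ 2 + μ₁₃ ^ 2 * μ₂₃ ^ 2) := by
  obtain rfl : x = N51.dirac μ₁₂ lam₁₂₄ μ₁₃ lam₁₂₅ lam₁₃ μ₁₄ μ₂₃ := hx
  have h_no_scalar := eq_zero_of_sum_e_mul_mul_e_eq_smul
    (N51.sum_e_mul_fourVector_mul_e μ₁₂ lam₁₂₄ μ₁₃ lam₁₂₅ lam₁₃ μ₁₄ μ₂₃) (by norm_num)
  have h_unit := isUnit_algebraMap_add_iff
    (N51.fourVector_mul_self μ₁₂ lam₁₂₄ μ₁₃ lam₁₂₅ lam₁₃ μ₁₄ μ₂₃) h_no_scalar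
    (N51.normSq μ₁₂ lam₁₂₄ μ₁₃ lam₁₂₅ lam₁₃ μ₁₄ μ₂₃)
  rw [← N51.dirac_mul_self, (Commute.refl _).isUnit_mul_iff, and_self] at h_unit
  exact (not_congr h_unit).trans not_not
end
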